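/- arXiv:2603.09569 — 11 statements merged into one kernel-verified Lean document; each statement's English description precedes it below -/
import Mathlib

section
/- The axiom (A1_{I^w}) is valid in all topic-sensitive models: for any model M and world w, if M, w ⊨ ¬I^w φ ∧ ¬I^w ψ̄ ∧ ¬I^w χ̄, then M, w ⊨ ¬I^w(φ → ψ) ∨ ¬I^w(¬φ → χ). -/
/-- Formulas of the topic-sensitive languages, with ignorance operators
`Iw` (ignorance whether), `Iu` (unknown truth), `Id` (disbelieving ignorance),
and the grasping operator `G`. -/
inductive Form : Type where
  | var : ℕ → Form
  | neg : Form → Form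
  | conj : Form → Form → Form
  | Iw : Form → Form
  | Iu : Form → Form
  | Id : Form → Form
  | G : Form → Form

def Form.disj (φ ψ : Form) : Form := .neg (.conj (.neg φ) (.neg ψ))
def Form.impl (φ ψ : Form) : Form := .neg (.conj φ (.neg ψ))
def Form.iff (φ ψ : Form) : Form := .conj (φ.impl ψ) (ψ.impl φ)

/-- A topic model: topics `T`, an idempotent commutative associative fusion,
a designated topic `K` (the totality of grasped topics), and a topic
assignment to propositional variables. -/
structure TopicModel (T : Type) where
  fuse : T → T → T
  fuse_idem : ∀ a, fuse a a = a
  fuse_comm : ∀ a b, fuse a b = fuse b a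
  fuse_assoc : ∀ a b c, fuse (fuse a b) c = fuse a (fuse b c)
  K : T
  tv : ℕ → T

/-- Topic parthood: `a ⊑ b` iff `a ⊕ b = b`. -/
def TopicModel.part {T : Type} (TM : TopicModel T) (a b : T) : Prop :=
  TM.fuse a b = b

/-- Topic of a formula: fusion of the topics of its variables
(all operators are topic-transparent). -/
def TopicModel.t {T : Type} (TM : TopicModel T) : Form → T
  | .var p => TM.tv p
  | .neg φ => TM.t φ
  | .conj φ ψ => TM.fuse (TM.t φ) (TM.t ψ)
  | .Iw φ => TM.t φ
  | .Iu φ => TM.t φ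
  | .Id φ => TM.t φ
  | .G φ => TM.t φ

/-- A topic-sensitive model. -/
structure TSModel (W T : Type) where
  ne : Nonempty W
  R : W → W → Prop
  v : ℕ → W → Prop
  TM : TopicModel T

/-- Satisfaction in a topic-sensitive model. -/
def TSModel.sat {W T : Type} (M : TSModel W T) : W → Form → Prop
  | w, .var p => M.v p w
  | w, .neg φ => ¬ M.sat w φ
  | w, .conj φ ψ => M.sat w φ ∧ M.sat w ψ
  | w, .Iw φ => ¬ M.TM.part (M.TM.t φ) M.TM.K ∨
      ∃ w' w'', M.R w w' ∧ M.R w w'' ∧ M.sat w' φ ∧ ¬ M.sat w'' φ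
  | w, .Iu φ => ¬ M.TM.part (M.TM.t φ) M.TM.K ∨
      (M.sat w φ ∧ ∃ w', M.R w w' ∧ ¬ M.sat w' φ)
  | w, .Id φ => M.TM.part (M.TM.t φ) M.TM.K ∧ M.sat w φ ∧
      ∀ w', w' ≠ w → M.R w w' → ¬ M.sat w' φ
  | _, .G φ => M.TM.part (M.TM.t φ) M.TM.K

/-- `φ̄`: the conjunction of excluded-middle instances `x ∨ ¬x` over the
variables occurring in `φ`. -/
def Form.bar : Form → Form
  | .var p => (Form.var p).disj (Form.neg (Form.var p))
  | .neg φ => φ.bar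
  | .conj φ ψ => .conj φ.bar ψ.bar
  | .Iw φ => φ.bar
  | .Iu φ => φ.bar
  | .Id φ => φ.bar
  | .G φ => φ.bar

/-- Validity in all topic-sensitive models. -/
def TSValid (φ : Form) : Prop :=
  ∀ (W T : Type) (M : TSModel W T) (w : W), M.sat w φ

lemma t_bar {T : Type} (TM : TopicModel T) (φ : Form) : TM.t φ.bar = TM.t φ := by
  induction φ with
  | var p => simp [Form.bar, Form.disj, TopicModel.t, TM.fuse_idem]
  | conj φ ψ ihφ ihψ => simp [Form.bar, TopicModel.t, ihφ, ihψ]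
  | neg φ ih => simpa [Form.bar, TopicModel.t] using ih
  | Iw φ ih => simpa [Form.bar, TopicModel.t] using ih
  | Iu φ ih => simpa [Form.bar, TopicModel.t] using ih
  | Id φ ih => simpa [Form.bar, TopicModel.t] using ih
  | G φ ih => simpa [Form.bar, TopicModel.t] using ih

lemma part_fuse {T : Type} (TM : TopicModel T) {a b : T}
    (ha : TM.part a TM.K) (hb : TM.part b TM.K) : TM.part (TM.fuse a b) TM.K := by
  unfold TopicModel.part at *
  rw [TM.fuse_assoc, hb, ha]

/-- validity of (A1_{Iʷ}). -/
theorem A1_Iw_valid {W T : Type} (M : TSModel W T) (w : W) (φ ψ χ : Form)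
    (h : M.sat w (.conj (.neg (.Iw φ)) (.conj (.neg (.Iw ψ.bar)) (.neg (.Iw χ.bar))))) :
    M.sat w ((Form.neg (.Iw (φ.impl ψ))).disj (.neg (.Iw ((Form.neg φ).impl χ)))) := by
  simp only [TSModel.sat, Form.disj, Form.impl, Form.bar] at h ⊢
  obtain ⟨h1, h2, h3⟩ := h
  push_neg at h1 h2 h3
  obtain ⟨hφK, hφag⟩ := h1
  have hψK : M.TM.part (M.TM.t ψ) M.TM.K := by
    have := h2.1; rwa [t_bar] at this
  have hχK : M.TM.part (M.TM.t χ) M.TM.K := by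
    have := h3.1; rwa [t_bar] at this
  -- topic conditions for both implications
  have tK1 : M.TM.part (M.TM.t (Form.neg (Form.conj φ (Form.neg ψ)))) M.TM.K := by
    simpa [TopicModel.t] using part_fuse M.TM hφK hψK
  have tK2 : M.TM.part (M.TM.t (Form.neg (Form.conj (Form.neg φ) (Form.neg χ)))) M.TM.K := by
    simpa [TopicModel.t] using part_fuse M.TM hφK hχK
  -- either no accessible world satisfies φ, or none falsifies φ
  by_cases hall : ∃ w', M.R w w' ∧ M.sat w' φ
  · -- all accessible satisfy φ : ¬φ→χ is true at all accessible worlds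
    obtain ⟨w1, hR1, hφ1⟩ := hall
    intro hc
    apply hc.2
    rintro (h | ⟨w', w'', hR', hR'', _, hbad⟩)
    · exact h tK2
    · rw [not_not] at hbad
      exact hbad.1 (hφag w1 w'' hR1 hR'' hφ1)
  · -- no accessible world satisfies φ : φ→ψ is true at all accessible worlds
    push_neg at hall
    intro hc
    apply hc.1
    rintro (h | ⟨w', w'', hR', hR'', _, hbad⟩)
    · exact h tK1
    · rw [not_not] at hbad
      exact hall w'' hR'' hbad.1
end

section
/- The axiom (A3_{I^w}) is valid in all topic-sensitive models: for any model M and world w, if M, w ⊨ ¬I^w φ and M, w ⊨ ¬I^w ψ, then M, w ⊨ ¬I^w(φ ∧ ψ). -/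
/-- validity of (A3_{Iʷ}). -/
theorem A3_Iw_valid {W T : Type} (M : TSModel W T) (w : W) (φ ψ : Form)
    (h1 : M.sat w (.neg (.Iw φ))) (h2 : M.sat w (.neg (.Iw ψ))) :
    M.sat w (.neg (.Iw (.conj φ ψ))) := by
  simp only [TSModel.sat] at *
  push_neg at h1 h2 ⊢
  obtain ⟨hφK, hφ⟩ := h1
  obtain ⟨hψK, hψ⟩ := h2
  refine ⟨?_, ?_⟩
  · show M.TM.fuse (M.TM.fuse (M.TM.t φ) (M.TM.t ψ)) M.TM.K = M.TM.K
    unfold TopicModel.part at hφK hψK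
    rw [M.TM.fuse_assoc, hψK, hφK]
  · rintro w' w'' hR' hR'' ⟨hφ', hψ'⟩
    exact ⟨hφ w' w'' hR' hR'' hφ', hψ w' w'' hR' hR'' hψ'⟩
end

section
/- The axiom (A6_{I^w}) is valid in all topic-sensitive models: for any model M and world w, if M, w ⊨ ¬I^w(φ → ¬ψ) ∧ ¬I^w φ ∧ ¬I^w(ψ → φ), then M, w ⊨ ¬I^w ψ. -/
/-- validity of (A6_{Iʷ}). -/
theorem A6_Iw_valid {W T : Type} (M : TSModel W T) (w : W) (φ ψ : Form)
    (h : M.sat w (.conj (.neg (.Iw (φ.impl (.neg ψ))))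
      (.conj (.neg (.Iw φ)) (.neg (.Iw (ψ.impl φ)))))) :
    M.sat w (.neg (.Iw ψ)) := by
  simp only [TSModel.sat, Form.impl, TopicModel.t, not_or, not_exists, not_and, not_not] at h ⊢
  obtain ⟨⟨h1t, h1⟩, ⟨h2t, h2⟩, ⟨h3t, h3⟩⟩ := h
  constructor
  · unfold TopicModel.part at h1t ⊢
    have h1t' : M.TM.fuse (M.TM.fuse (M.TM.t ψ) (M.TM.t φ)) M.TM.K = M.TM.K := by
      rw [M.TM.fuse_comm (M.TM.t ψ)]; exact h1t
    calc M.TM.fuse (M.TM.t ψ) M.TM.K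
        = M.TM.fuse (M.TM.t ψ) (M.TM.fuse (M.TM.fuse (M.TM.t ψ) (M.TM.t φ)) M.TM.K) := by
          rw [h1t']
      _ = M.TM.fuse (M.TM.fuse (M.TM.t ψ) (M.TM.fuse (M.TM.t ψ) (M.TM.t φ))) M.TM.K :=
          (M.TM.fuse_assoc _ _ _).symm
      _ = M.TM.fuse (M.TM.fuse (M.TM.fuse (M.TM.t ψ) (M.TM.t ψ)) (M.TM.t φ)) M.TM.K := by
          rw [M.TM.fuse_assoc (M.TM.t ψ) (M.TM.t ψ)]
      _ = M.TM.fuse (M.TM.fuse (M.TM.t ψ) (M.TM.t φ)) M.TM.K := by rw [M.TM.fuse_idem]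
      _ = M.TM.K := h1t' 
  · intro w' w'' hw' hw'' hψ'
    by_contra hψ''
    by_cases hφ' : M.sat w' φ
    · exact h1 w'' w' hw'' hw' (fun _ => hψ'') hφ' hψ'
    · exact hφ' (h3 w'' w' hw'' hw' (fun hc => absurd hc hψ'') hψ')
end

section
/- The necessitation rule (NEC_{I^w}) preserves validity: if φ is valid in all topic-sensitive models, then ¬I^w φ̄ → ¬I^w φ is valid in all topic-sensitive models. -/
/-- the rule (NEC_{Iʷ}) preserves validity. -/
theorem NEC_Iw_preserves_validity (φ : Form) (h : TSValid φ) :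
    TSValid ((Form.neg (.Iw φ.bar)).impl (.neg (.Iw φ))) := by
  intro W T M w
  simp only [Form.impl, TSModel.sat]
  rintro ⟨hbar, hIw⟩
  rcases not_not.mp hIw with h2 | ⟨w', w'', _, _, _, hne⟩
  · exact hbar (Or.inl (t_bar M.TM φ ▸ h2))
  · exact hne (h W T M w'')
end

section
/- The axiom (A7_{I^u}) is valid in all topic-sensitive models: for any model M and world w, if M, w ⊨ ¬I^u(φ ∨ ψ) ∧ ¬I^u(φ → ψ), then M, w ⊨ ¬I^u ψ. -/
/-- validity of (A7_{Iᵘ}). -/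
theorem A7_Iu_valid {W T : Type} (M : TSModel W T) (w : W) (φ ψ : Form)
    (h : M.sat w (.conj (.neg (.Iu (φ.disj ψ))) (.neg (.Iu (φ.impl ψ))))) :
    M.sat w (.neg (.Iu ψ)) := by
  obtain ⟨h1, h2⟩ := h
  simp only [TSModel.sat, Form.disj, Form.impl, TopicModel.t, not_or, not_and,
    not_exists, not_not] at h1 h2 ⊢
  obtain ⟨hp1, hs1⟩ := h1
  obtain ⟨hp2, hs2⟩ := h2
  constructor
  · -- t ψ ⊑ K
    unfold TopicModel.part at hp1 ⊢
    conv_lhs => rw [← hp1]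
    rw [← M.TM.fuse_assoc, ← M.TM.fuse_assoc,
      M.TM.fuse_comm (M.TM.t ψ) (M.TM.t φ), M.TM.fuse_assoc (M.TM.t φ),
      M.TM.fuse_idem]
    exact hp1
  · intro hψw w' hRw'
    by_cases hφ : M.sat w' φ
    · exact hs2 (fun _ => hψw) w' hRw' hφ
    · exact hs1 (fun _ => hψw) w' hRw' hφ
end

section
/- The rule (HIR) of system HDI preserves validity: if φ → ψ is valid in all topic-sensitive models, then φ → (I^d ψ → (G φ → I^d φ)) is valid in all topic-sensitive models, where I^d is the hyperintensional disbelieving ignorance operator and G is the grasping operator. -/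
/-- the rule (HIR) of HDI preserves validity. -/
theorem HIR_preserves_validity (φ ψ : Form) (h : TSValid (φ.impl ψ)) :
    TSValid (φ.impl ((Form.Id ψ).impl ((Form.G φ).impl (.Id φ)))) := by
  intro W T M w hc
  obtain ⟨hφ, hB⟩ := hc
  apply hB
  rintro ⟨hIdψ, hC⟩
  apply hC
  rintro ⟨hG, hD⟩
  apply hD
  obtain ⟨_, _, hψ⟩ := hIdψ
  refine ⟨hG, hφ, fun w' hne hR hφ' => hψ w' hne hR ?_⟩
  have h2 := h W T M w'
  by_contra hnψ
  exact h2 ⟨hφ', hnψ⟩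
end

section
/- The axiom (A2_{I^d}) is valid in all topic-sensitive models: for any model M and world w, if M, w ⊨ I^d φ and M, w ⊨ I^d ψ, then M, w ⊨ I^d(φ ∨ ψ). -/
/-- validity of (A2_{I^d}). -/
theorem A2_Id_valid {W T : Type} (M : TSModel W T) (w : W) (φ ψ : Form)
    (h1 : M.sat w (.Id φ)) (h2 : M.sat w (.Id ψ)) :
    M.sat w (.Id (φ.disj ψ)) := by
  obtain ⟨hk1, hs1, ha1⟩ := h1
  obtain ⟨hk2, hs2, ha2⟩ := h2
  refine ⟨?_, ?_, ?_⟩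
  · show M.TM.fuse (M.TM.fuse (M.TM.t φ) (M.TM.t ψ)) M.TM.K = M.TM.K
    rw [M.TM.fuse_assoc, hk2, hk1]
  · show ¬(¬ M.sat w φ ∧ ¬ M.sat w ψ)
    exact fun h => h.1 hs1
  · intro w' hne hR
    show ¬¬(¬ M.sat w' φ ∧ ¬ M.sat w' ψ)
    exact not_not.mpr ⟨ha1 w' hne hR, ha2 w' hne hR⟩
end

section
/- The omniscience rule fails in the topic-sensitive setting for I^w and I^u: there exists a topic-sensitive model M' and a world w such that p ∨ ¬p is valid, yet M', w ⊨ I^w(p ∨ ¬p) and M', w ⊨ I^u(p ∨ ¬p). -/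
/-- the omniscience rule fails for `Iʷ` and `Iᵘ` in the
topic-sensitive setting. -/
theorem omniscience_rule_fails_topic :
    ∃ (W T : Type) (M : TSModel W T) (w : W),
      TSValid ((Form.var 0).disj (.neg (.var 0))) ∧
      M.sat w (.Iw ((Form.var 0).disj (.neg (.var 0)))) ∧
      M.sat w (.Iu ((Form.var 0).disj (.neg (.var 0)))) := by
  refine ⟨Unit, Bool,
    { ne := ⟨()⟩, R := fun _ _ => False, v := fun _ _ => True,
      TM := { fuse := (· || ·), fuse_idem := by decide, fuse_comm := by decide,
              fuse_assoc := by decide, K := false, tv := fun _ => true } }, (), ?_, ?_, ?_⟩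
  · intro W T M w
    simp [TSModel.sat, Form.disj]
  · left
    simp [TopicModel.part, TopicModel.t, Form.disj]
  · left
    simp [TopicModel.part, TopicModel.t, Form.disj]
end

section
/- Closure under equivalence fails in the topic-sensitive setting: there exists a topic-sensitive model M' and world w such that (p ∨ ¬p) ↔ (q ∨ ¬q) is valid, yet M', w ⊨ ¬I(p ∨ ¬p) and M', w ⊨ I(q ∨ ¬q) — i.e., M' does not satisfy ¬I(p ∨ ¬p) ↔ ¬I(q ∨ ¬q) — for each of I ∈ {I^w, I^u}. -/
/-- closure under equivalence fails for `Iʷ` and `Iᵘ` in the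
topic-sensitive setting. -/
theorem closure_under_equivalence_fails_topic :
    ∃ (W T : Type) (M : TSModel W T) (w : W),
      TSValid (((Form.var 0).disj (.neg (.var 0))).iff
        ((Form.var 1).disj (.neg (.var 1)))) ∧
      M.sat w (.neg (.Iw ((Form.var 0).disj (.neg (.var 0))))) ∧
      M.sat w (.Iw ((Form.var 1).disj (.neg (.var 1)))) ∧
      M.sat w (.neg (.Iu ((Form.var 0).disj (.neg (.var 0))))) ∧
      M.sat w (.Iu ((Form.var 1).disj (.neg (.var 1)))) := by
  refine ⟨Unit, Bool,
    { ne := ⟨()⟩, R := fun _ _ => False, v := fun _ _ => True,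
      TM := { fuse := (· || ·), fuse_idem := Bool.or_self,
              fuse_comm := Bool.or_comm, fuse_assoc := Bool.or_assoc,
              K := false, tv := fun n => n == 1 } }, (), ?_, ?_, ?_, ?_, ?_⟩
  · intro W T M w
    simp [TSModel.sat, Form.iff, Form.impl, Form.disj]
  · simp [TSModel.sat, Form.disj, TopicModel.part, TopicModel.t, TopicModel.fuse]
  · simp [TSModel.sat, Form.disj, TopicModel.part, TopicModel.t, TopicModel.fuse]
  · simp [TSModel.sat, Form.disj, TopicModel.part, TopicModel.t, TopicModel.fuse]
  · simp [TSModel.sat, Form.disj, TopicModel.part, TopicModel.t, TopicModel.fuse]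
end

section
/- Hyperintensionality of ignorance-whether is witnessed: there is a topic-sensitive model M with a world w such that p ↔ (p ∧ (q ∨ ¬q)) holds at every world of M, yet M, w ⊨ ¬I^w p and M, w ⊨ I^w(p ∧ (q ∨ ¬q)). -/
/-- Topics `b ⊏ a` are `false ⊏ true` under `or`; the variable `p = var 0` has topic
`b = 𝔎` and every other variable has topic `a`. -/
def witnessTopics : TopicModel Bool where
  fuse := or
  fuse_idem := Bool.or_self
  fuse_comm := Bool.or_comm
  fuse_assoc := Bool.or_assoc
  K := false
  tv n := n != 0

/-- Worlds `w = true` and `w' = false`; `w` sees both, and every variable is true everywhere. -/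
def witnessModel : TSModel Bool Bool where
  ne := ⟨true⟩
  R w _ := w = true
  v _ _ := True
  TM := witnessTopics

namespace TopicModel

variable {T : Type} (TM : TopicModel T)

theorem part_of_fuse_part_right {a b c : T} (h : TM.part (TM.fuse a b) c) : TM.part b c := by
  unfold part at h ⊢
  calc TM.fuse b c = TM.fuse b (TM.fuse (TM.fuse a b) c) := by rw [h]
    _ = TM.fuse (TM.fuse a (TM.fuse b b)) c := by
      rw [← TM.fuse_assoc, TM.fuse_comm b, TM.fuse_assoc a b b]
    _ = c := by rw [TM.fuse_idem, h]

theorem t_conj_excludedMiddle (φ ψ : Form) :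
    TM.t (φ.conj (ψ.disj (.neg ψ))) = TM.fuse (TM.t φ) (TM.t ψ) := by
  simp only [t, Form.disj, TM.fuse_idem]

end TopicModel

namespace TSModel

variable {W T : Type} (M : TSModel W T)

theorem sat_iff_conj_excludedMiddle (u : W) (φ ψ : Form) :
    M.sat u (φ.iff (φ.conj (ψ.disj (.neg ψ)))) := by
  simp only [sat, Form.iff, Form.impl, Form.disj]
  tauto

theorem not_sat_Iw_of_part_of_forall {w : W} {φ : Form}
    (hpart : M.TM.part (M.TM.t φ) M.TM.K) (hφ : ∀ u, M.R w u → M.sat u φ) :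
    ¬ M.sat w (.Iw φ) := by
  rintro (hnpart | ⟨-, w'', -, hw'', -, hnφ⟩)
  · exact hnpart hpart
  · exact hnφ (hφ w'' hw'')

end TSModel

/-- hyperintensionality of ignorance-whether. -/
theorem hyperintensionality_Iw :
    ∃ (W T : Type) (M : TSModel W T) (w : W),
      (∀ u : W, M.sat u ((Form.var 0).iff
        ((Form.var 0).conj ((Form.var 1).disj (.neg (.var 1)))))) ∧
      M.sat w (.neg (.Iw (.var 0))) ∧
      M.sat w (.Iw ((Form.var 0).conj ((Form.var 1).disj (.neg (.var 1))))) := by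
  refine ⟨Bool, Bool, witnessModel, true,
    fun u => witnessModel.sat_iff_conj_excludedMiddle u _ _, ?_, ?_⟩
  · exact witnessModel.not_sat_Iw_of_part_of_forall rfl fun _ _ => trivial
  · -- `q ∨ ¬q` drags the ungrasped topic of `q` into the topic of the conjunction.
    refine Or.inl fun hpart => ?_
    rw [TopicModel.t_conj_excludedMiddle] at hpart
    exact Bool.noConfusion (witnessTopics.part_of_fuse_part_right hpart)
end

section
/- Hyperintensionality of disbelieving ignorance is witnessed: there is a topic-sensitive model M with a world w such that p ↔ (p ∧ (q ∨ ¬q)) holds at every world, yet M, w ⊨ I^d p and M, w ⊨ ¬I^d(p ∧ (q ∨ ¬q)). -/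
namespace TopicModel

variable {T : Type} (TM : TopicModel T)

theorem t_disj_neg_self (φ : Form) : TM.t (φ.disj (.neg φ)) = TM.t φ :=
  TM.fuse_idem _

end TopicModel

namespace TSModel

variable {W T : Type} (M : TSModel W T)

theorem sat_disj (w : W) (φ ψ : Form) : M.sat w (φ.disj ψ) ↔ M.sat w φ ∨ M.sat w ψ := by
  simp only [Form.disj, sat]
  tauto

theorem sat_iff (w : W) (φ ψ : Form) : M.sat w (φ.iff ψ) ↔ (M.sat w φ ↔ M.sat w ψ) := by
  simp only [Form.iff, Form.impl, sat]
  tauto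

theorem not_sat_Id_conj_excludedMiddle {w : W} {ψ : Form} (hψ : ¬ M.TM.part (M.TM.t ψ) M.TM.K)
    (φ : Form) : ¬ M.sat w (.Id (φ.conj (ψ.disj (.neg ψ)))) := fun h =>
  hψ (M.TM.t_disj_neg_self ψ ▸ M.TM.part_of_fuse_part_right h.1)

end TSModel

theorem tsValid_iff_conj_excludedMiddle (φ ψ : Form) :
    TSValid (φ.iff (φ.conj (ψ.disj (.neg ψ)))) := fun _ _ M w => by
  simp only [TSModel.sat_iff, TSModel.sat_disj, TSModel.sat]
  tauto

/-- Worlds: `true` is `w` and `false` is `w'`. Topics: `false` is `b = 𝔎` (the topic of `p`)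
and `true` is `a` (the topic of `q`), fused by `or`, so that `b ⊏ a`. -/
def ignoranceWitness : TSModel Bool Bool where
  ne := ⟨true⟩
  R a b := a = true ∧ b = false
  v _ u := u = true
  TM :=
    { fuse := or
      fuse_idem := Bool.or_self
      fuse_comm := Bool.or_comm
      fuse_assoc := Bool.or_assoc
      K := false
      tv := fun n => decide (n ≠ 0) }

theorem ignoranceWitness_sat_Id_var_zero : ignoranceWitness.sat true (.Id (.var 0)) :=
  ⟨rfl, rfl, fun _ hne _ hsat => hne hsat⟩

/-- hyperintensionality of disbelieving ignorance. -/
theorem hyperintensionality_Id :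
    ∃ (W T : Type) (M : TSModel W T) (w : W),
      (∀ u : W, M.sat u ((Form.var 0).iff
        ((Form.var 0).conj ((Form.var 1).disj (.neg (.var 1)))))) ∧
      M.sat w (.Id (.var 0)) ∧
      M.sat w (.neg (.Id ((Form.var 0).conj ((Form.var 1).disj (.neg (.var 1)))))) :=
  ⟨Bool, Bool, ignoranceWitness, true,
    tsValid_iff_conj_excludedMiddle _ _ Bool Bool ignoranceWitness,
    ignoranceWitness_sat_Id_var_zero,
    ignoranceWitness.not_sat_Id_conj_excludedMiddle (ψ := .var 1) Bool.true_eq_false.mp _⟩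
end
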